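/- Let M be a compact metric space, F : M ⊸ M an usc set-valued map, and σ_F the one-sided shift on M^F = {(x_i)_{i∈ℕ} : x_{i+1} ∈ F(x_i)} with metric ρ((x_n),(y_n)) = Σ_{j≥0} dist(x_j,y_j)/2^j. Then the topological entropy of σ_F is at least the topological entropy of F: h_top(σ_F) ≥ h_top(F). -/

import Mathlib

open Metric Filter

/-- Orbit segments of length `n` of a set-valued map `F`. -/
def Seg {M : Type*} (F : M → Set M) (n : ℕ) : Set (Fin n → M) :=
  {x | ∀ i : Fin n, ∀ h : (i : ℕ) + 1 < n, x ⟨(i : ℕ) + 1, h⟩ ∈ F (x i)}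

/-- `s_n(ε)` for `F`: maximal cardinality of an `(n,ε)`-separated set of orbit
segments. -/
noncomputable def sSep {M : Type*} [MetricSpace M] (F : M → Set M) (n : ℕ) (ε : ℝ) : ℕ :=
  sSup {m : ℕ | ∃ A : Set (Fin n → M), A.Finite ∧ A ⊆ Seg F n ∧
    (A.Pairwise fun x y => ∃ i : Fin n, ε < dist (x i) (y i)) ∧ A.ncard = m}

/-- The one-sided sub-orbit space `M^F`. -/
def MF {M : Type*} (F : M → Set M) : Set (ℕ → M) :=
  {x | ∀ i : ℕ, x (i + 1) ∈ F (x i)}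

/-- The metric `ρ` on sequences. -/
noncomputable def rho {M : Type*} [MetricSpace M] (x y : ℕ → M) : ℝ :=
  ∑' j : ℕ, dist (x j) (y j) / 2 ^ j

/-- The one-sided shift on sequences. -/
def shiftSeq {M : Type*} (x : ℕ → M) : ℕ → M := fun i => x (i + 1)

/-- Bowen `(n,ε)`-separated cardinality for the shift `σ_F` on `(M^F, ρ)`. -/
noncomputable def sSepShift {M : Type*} [MetricSpace M] (F : M → Set M) (n : ℕ)
    (ε : ℝ) : ℕ :=
  sSup {m : ℕ | ∃ A : Set (ℕ → M), A.Finite ∧ A ⊆ MF F ∧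
    (A.Pairwise fun x y => ∃ j < n, ε < rho (shiftSeq^[j] x) (shiftSeq^[j] y)) ∧
    A.ncard = m}

/-
Every orbit segment of `F` of length `n ≥ 1` extends to a full orbit in `M^F`, and since `ρ`
dominates the distance of the zeroth coordinates, an `(n, ε)`-separated set of segments extends
to an `(n, ε)`-separated set of orbits for `σ_F` of the same cardinality: `s_n(ε) ≤ s_n^σ(ε)`.
As `s_n^σ(ε)` is a supremum in `ℕ`, the comparison also needs the `(n, ε)`-separated sets of
`σ_F` to be uniformly bounded; by compactness, sequences that are `ε/8`-close on their first
`n + K` coordinates are `ε`-close in `ρ` along `n` shifts once `K` makes the tail of `ρ` small.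
-/

open Set Finset

lemma iterate_shiftSeq_apply {M : Type*} (x : ℕ → M) (j i : ℕ) :
    shiftSeq^[j] x i = x (i + j) := by
  induction j generalizing x with
  | zero => rfl
  | succ j ih => rw [Function.iterate_succ_apply, ih]; rfl

section Rho

variable {M : Type*} [MetricSpace M] {D : ℝ}

lemma summable_dist_div_two_pow (hD : ∀ a b : M, dist a b ≤ D) (x y : ℕ → M) :
    Summable fun j => dist (x j) (y j) / 2 ^ j :=
  (summable_geometric_two' (2 * D)).of_nonneg_of_le (fun _ => by positivity) fun _ =>
    div_le_div_of_nonneg_right ((hD _ _).trans_eq (by ring)) (by positivity)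

lemma dist_le_rho (hD : ∀ a b : M, dist a b ≤ D) (x y : ℕ → M) :
    dist (x 0) (y 0) ≤ rho x y := by
  simpa [rho] using (summable_dist_div_two_pow hD x y).le_tsum 0 fun _ _ => by positivity

lemma rho_le_of_forall_dist_le (hD : ∀ a b : M, dist a b ≤ D) {x y : ℕ → M} {δ : ℝ}
    (hδ : 0 ≤ δ) {K : ℕ} (h : ∀ k < K, dist (x k) (y k) ≤ δ) :
    rho x y ≤ 2 * δ + 2 * D / 2 ^ K := by
  have hs := summable_dist_div_two_pow hD x y
  rw [rho, ← hs.sum_add_tsum_nat_add K]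
  gcongr ?_ + ?_
  · calc ∑ k ∈ range K, dist (x k) (y k) / 2 ^ k
        ≤ ∑ k ∈ range K, δ * (1 / 2) ^ k := by
          refine sum_le_sum fun k hk => ?_
          rw [one_div_pow, mul_one_div]
          exact div_le_div_of_nonneg_right (h k (Finset.mem_range.1 hk)) (by positivity)
      _ = δ * ∑ k ∈ range K, (1 / 2 : ℝ) ^ k := (mul_sum _ _ _).symm
      _ ≤ 2 * δ := by linarith [mul_le_mul_of_nonneg_left (sum_geometric_two_le K) hδ]
  · calc ∑' k, dist (x (k + K)) (y (k + K)) / 2 ^ (k + K)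
        ≤ ∑' k, 2 * D / 2 ^ K / 2 / 2 ^ k := by
          refine ((summable_nat_add_iff K).2 hs).tsum_le_tsum (fun k => ?_)
            (summable_geometric_two' _)
          calc dist (x (k + K)) (y (k + K)) / 2 ^ (k + K) ≤ D / 2 ^ (k + K) := by
                gcongr; exact hD _ _
            _ = 2 * D / 2 ^ K / 2 / 2 ^ k := by rw [pow_add]; field_simp
      _ = 2 * D / 2 ^ K := tsum_geometric_two' _

end Rho

lemma exists_mem_MF_extends {M : Type*} {F : M → Set M} (hne : ∀ x, (F x).Nonempty) {n : ℕ}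
    (hn : 0 < n) {x : Fin n → M} (hx : x ∈ Seg F n) :
    ∃ y ∈ MF F, ∀ i : Fin n, y i = x i := by
  set g : M → M := fun z => (hne z).some
  -- follow `x` up to time `n - 1`, then keep choosing points of `F` with `g`
  refine ⟨fun i => g^[i - (n - 1)] (x ⟨min i (n - 1), by omega⟩), fun i => ?_, fun i => ?_⟩
  · by_cases hi : i + 1 < n
    · simp only [Nat.sub_eq_zero_of_le (by omega : i ≤ n - 1),
        Nat.sub_eq_zero_of_le (by omega : i + 1 ≤ n - 1), min_eq_left (by omega : i ≤ n - 1),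
        min_eq_left (by omega : i + 1 ≤ n - 1), Function.iterate_zero, id]
      exact hx ⟨i, by omega⟩ hi
    · simp only [min_eq_right (by omega : n - 1 ≤ i + 1), min_eq_right (by omega : n - 1 ≤ i),
        show i + 1 - (n - 1) = i - (n - 1) + 1 by omega, Function.iterate_succ_apply']
      exact (hne _).some_mem
  · simp only [Nat.sub_eq_zero_of_le (by omega : (i : ℕ) ≤ n - 1),
      min_eq_left (by omega : (i : ℕ) ≤ n - 1), Function.iterate_zero, id]

lemma dist_le_diam_univ {M : Type*} [MetricSpace M] [CompactSpace M] (a b : M) :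
    dist a b ≤ diam (univ : Set M) :=
  dist_le_diam_of_mem isBounded_of_compactSpace (Set.mem_univ a) (Set.mem_univ b)

lemma exists_ncard_le_of_pairwise_separated {M : Type*} [MetricSpace M] [CompactSpace M]
    (n : ℕ) {ε : ℝ} (hε : 0 < ε) :
    ∃ N : ℕ, ∀ A : Set (ℕ → M),
      A.Pairwise (fun x y => ∃ j < n, ε < rho (shiftSeq^[j] x) (shiftSeq^[j] y)) →
      A.ncard ≤ N := by
  obtain ⟨K, hK⟩ : ∃ K : ℕ, 2 * diam (univ : Set M) / 2 ^ K < ε / 2 :=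
    ((tendsto_const_nhds (x := 2 * diam (univ : Set M))).div_atTop
      (tendsto_pow_atTop_atTop_of_one_lt one_lt_two)).eventually
      (gt_mem_nhds (half_pos hε)) |>.exists
  obtain ⟨t, -, htf, hcover⟩ :=
    finite_cover_balls_of_compact (isCompact_univ (X := M)) (by positivity : 0 < ε / 8)
  have hnet : ∀ z : M, ∃ c ∈ t, dist z c < ε / 8 := by
    simpa using fun z => hcover (mem_univ z)
  choose c hct hc using hnet
  -- sequences with the same pattern of `ε/8`-net points on the first `n + K` coordinates
  -- are not `(n, ε)`-separated
  refine ⟨(univ.pi fun _ : Fin (n + K) => t).ncard, fun A hA =>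
    ncard_le_ncard_of_injOn (fun x i => c (x i)) (fun x _ i _ => hct (x i)) ?_
      (Finite.pi fun _ => htf)⟩
  intro x hx y hy hxy
  by_contra hne
  obtain ⟨j, hj, hsep⟩ := hA hx hy hne
  have hclose : ∀ k < K, dist (shiftSeq^[j] x k) (shiftSeq^[j] y k) ≤ ε / 4 := by
    intro k hk
    have hcxy : c (x (k + j)) = c (y (k + j)) := congrFun hxy ⟨k + j, by omega⟩
    rw [iterate_shiftSeq_apply, iterate_shiftSeq_apply]
    calc dist (x (k + j)) (y (k + j))
        ≤ dist (x (k + j)) (c (x (k + j))) + dist (y (k + j)) (c (y (k + j))) := by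
          rw [hcxy]; exact dist_triangle_right _ _ _
      _ ≤ ε / 4 := by linarith [hc (x (k + j)), hc (y (k + j))]
  linarith [rho_le_of_forall_dist_le dist_le_diam_univ (by positivity) hclose]

lemma sSep_le_sSepShift {M : Type*} [MetricSpace M] [CompactSpace M] {F : M → Set M}
    (hne : ∀ x, (F x).Nonempty) {n : ℕ} (hn : 0 < n) {ε : ℝ} (hε : 0 < ε) :
    sSep F n ε ≤ sSepShift F n ε := by
  obtain ⟨N, hN⟩ := exists_ncard_le_of_pairwise_separated (M := M) n hε
  refine csSup_le_csSup ⟨N, fun m ⟨A, _, _, hA, hm⟩ => hm ▸ hN A hA⟩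
    ⟨0, ∅, finite_empty, empty_subset _, pairwise_empty _, ncard_empty _⟩ ?_
  rintro m ⟨A, hAf, hAseg, hA, rfl⟩
  obtain rfl | ⟨a, -⟩ := A.eq_empty_or_nonempty
  · exact ⟨∅, finite_empty, empty_subset _, pairwise_empty _, by rw [ncard_empty, ncard_empty]⟩
  have : Nonempty M := ⟨a ⟨0, hn⟩⟩
  choose! ext hextMF hext using fun x (hx : x ∈ Seg F n) => exists_mem_MF_extends hne hn hx
  have hinj : InjOn ext A := fun x hx y hy hxy =>
    funext fun i => by rw [← hext x (hAseg hx), ← hext y (hAseg hy), hxy]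
  refine ⟨ext '' A, hAf.image _, image_subset_iff.2 fun x hx => hextMF x (hAseg hx), ?_,
    hinj.ncard_image⟩
  rintro _ ⟨x, hx, rfl⟩ _ ⟨y, hy, rfl⟩ hxy
  obtain ⟨i, hi⟩ := hA hx hy (ne_of_apply_ne ext hxy)
  refine ⟨i, i.isLt, hi.trans_le ?_⟩
  have := dist_le_rho dist_le_diam_univ (shiftSeq^[i] (ext x)) (shiftSeq^[i] (ext y))
  rwa [iterate_shiftSeq_apply, iterate_shiftSeq_apply, zero_add, hext x (hAseg hx),
    hext y (hAseg hy)] at this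

theorem stmt19_general {M : Type*} [MetricSpace M] [CompactSpace M]
    (F : M → Set M) (hne : ∀ x, (F x).Nonempty) :
    (⨆ (ε : ℝ) (_ : 0 < ε),
        atTop.limsup fun n : ℕ => ((Real.log (sSep F n ε) / n : ℝ) : EReal)) ≤
      (⨆ (ε : ℝ) (_ : 0 < ε),
        atTop.limsup fun n : ℕ => ((Real.log (sSepShift F n ε) / n : ℝ) : EReal)) := by
  refine iSup₂_mono fun ε hε => limsup_le_limsup ?_
  filter_upwards [eventually_gt_atTop 0] with n hn
  have hsep := sSep_le_sSepShift hne hn hε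
  have hlog : Real.log (sSep F n ε) ≤ Real.log (sSepShift F n ε) := by
    rcases (sSep F n ε).eq_zero_or_pos with h | h
    · simpa [h] using Real.log_natCast_nonneg _
    · exact Real.log_le_log (by exact_mod_cast h) (by exact_mod_cast hsep)
  exact EReal.coe_le_coe_iff.2 (div_le_div_of_nonneg_right hlog n.cast_nonneg)

/-- the topological entropy of the one-sided shift `σ_F` on `(M^F, ρ)`
is at least the topological entropy of the set-valued map `F`. -/
theorem stmt19 {M : Type*} [MetricSpace M] [CompactSpace M]
    (F : M → Set M) (hne : ∀ x, (F x).Nonempty) (hcp : ∀ x, IsCompact (F x))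
    (husc : ∀ V : Set M, IsOpen V → IsOpen {x | F x ⊆ V}) :
    (⨆ (ε : ℝ) (_ : 0 < ε),
        atTop.limsup fun n : ℕ => ((Real.log (sSep F n ε) / n : ℝ) : EReal)) ≤
      (⨆ (ε : ℝ) (_ : 0 < ε),
        atTop.limsup fun n : ℕ => ((Real.log (sSepShift F n ε) / n : ℝ) : EReal)) :=
  stmt19_general F hne
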